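/- On a 2-sphere, the Rayleigh energy t ↦ ∫_{S²} (|∇_{g_t} f|² + k R_{g_t} f²) dμ_{g_t} along the conformal path g_t = e^{2(t u)} g₀ is affine (linear) in t, for every fixed smooth f; consequently if g₀, g₁ = e^{2u} g₀ both lie in M^{≥0}_k(S²) with g₀ ∈ M^{>0}_k(S²), then g_t ∈ M^{>0}_k(S²) for all t ∈ (0,1). -/
import Mathlib


open MeasureTheory

/-- On `S²`, along the conformal path `g_t = e^{2tu} g₀`, the
Dirichlet energy `D f = ∫ |∇_{g_t} f|² dμ_{g_t}` is conformally invariant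
(independent of `t`), and the measure-weighted scalar curvature transforms as
`R_{g_t} dμ_{g_t} = (R_{g₀} − 2tΔ_{g₀}u) dμ_{g₀}`. Hence the Rayleigh energy
`E t f := D f + k ∫ (R_{g₀} − 2tΔ_{g₀}u) f² dμ_{g₀}`
is affine in `t`: `E t f = (1−t) E 0 f + t E 1 f` for every test function `f`.
Consequently, if `g₀ ∈ 𝓜^{>0}_k(S²)` (`E 0 f > 0` for all `f ≠ 0`) and
`g₁ = e^{2u} g₀ ∈ 𝓜^{≥0}_k(S²)` (`E 1 f ≥ 0` for all `f ≠ 0`), then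
`g_t ∈ 𝓜^{>0}_k(S²)` for all `t ∈ (0,1)`: `E t f > 0` for all `f ≠ 0`. -/
theorem stmt8
    {M : Type*} [MeasurableSpace M]  -- the 2-sphere
    (μ0 : Measure M)
    (k : ℝ) (hk : 0 < k)
    (R0 lapu : M → ℝ)  -- R_{g₀} and Δ_{g₀} u
    (F : Set (M → ℝ))  -- smooth test functions
    (D : (M → ℝ) → ℝ)  -- conformally invariant Dirichlet energy
    (hDnn : ∀ f ∈ F, 0 ≤ D f)
    (hint : ∀ f ∈ F, Integrable (fun x => R0 x * (f x) ^ 2) μ0 ∧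
      Integrable (fun x => lapu x * (f x) ^ 2) μ0)
    (E : ℝ → (M → ℝ) → ℝ)
    (hE : ∀ t : ℝ, ∀ f ∈ F,
      E t f = D f + k * ∫ x, (R0 x - 2 * t * lapu x) * (f x) ^ 2 ∂μ0) :
    (∀ t : ℝ, ∀ f ∈ F, E t f = (1 - t) * E 0 f + t * E 1 f) ∧
    ((∀ f ∈ F, f ≠ 0 → 0 < E 0 f) → (∀ f ∈ F, f ≠ 0 → 0 ≤ E 1 f) →
      ∀ t ∈ Set.Ioo (0 : ℝ) 1, ∀ f ∈ F, f ≠ 0 → 0 < E t f) := by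
  have key : ∀ t : ℝ, ∀ f ∈ F, E t f = (1 - t) * E 0 f + t * E 1 f := by
    intro t f hf
    obtain ⟨h1, h2⟩ := hint f hf
    have hI : ∀ s : ℝ, ∫ x, (R0 x - 2 * s * lapu x) * (f x) ^ 2 ∂μ0
        = (∫ x, R0 x * (f x) ^ 2 ∂μ0) - 2 * s * ∫ x, lapu x * (f x) ^ 2 ∂μ0 := by
      intro s
      have : ∀ x, (R0 x - 2 * s * lapu x) * (f x) ^ 2
          = R0 x * (f x) ^ 2 - (2 * s) * (lapu x * (f x) ^ 2) := by
        intro x; ring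
      simp_rw [this]
      rw [integral_sub h1 (h2.const_mul (2 * s)), MeasureTheory.integral_const_mul]
    rw [hE t f hf, hE 0 f hf, hE 1 f hf, hI, hI, hI]
    ring
  refine ⟨key, ?_⟩
  intro h0 h1 t ht f hf hfne
  rw [key t f hf]
  have := h0 f hf hfne
  have := h1 f hf hfne
  have h1t : 0 < 1 - t := by linarith [ht.2]
  nlinarith [ht.1, mul_pos h1t (h0 f hf hfne)]
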